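/- arXiv:2103.07155 — 3 statements merged into one kernel-verified Lean document; each statement's English description precedes it below -/
import Mathlib

section
/- Let (Ω, 𝔽, ℙ) be a probability space, let ε, ε̂, d : Ω → ℝ be random variables (ε the residual, ε̂ its AI-prediction, d the surrogate correction Δf), and set Δε := ε - ε̂. Let α > 0, η₁, η₂ ∈ (0,1], δ₁, δ₂ ∈ (0,1). Assume ε is integrable, ℙ[|Δε| ≥ η₁·|ε|] < δ₁ (weak accuracy) and ℙ[|ε̂ - d| ≥ η₂·|ε|] < δ₂ (weak fidelity). Then ℙ[|ε - d| > α] < ((η₁+η₂)/α)·E[|ε|] + δ₁ + δ₂ + δ₁·δ₂. (Note that Y - (f(x) + Δf(x)) = ε - d, so this bounds the loss in surrogate accuracy due to training error and lack of model fidelity.) -/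
/-!
Off the accuracy event `A = {|ε - ε̂| ≥ η₁|ε|}` and the fidelity event `B = {|ε̂ - d| ≥ η₂|ε|}`,
the triangle inequality through `ε̂` gives `|ε - d| < (η₁ + η₂)|ε|`. Hence `|ε - d| > α` forces
`A`, `B`, or `α ≤ (η₁ + η₂)|ε|`, and Markov's inequality bounds the probability of the last event by
`(η₁ + η₂)/α · E|ε|`; the union bound concludes.
-/

open MeasureTheory

theorem setOf_lt_abs_sub_subset {Ω : Type*} (f g h e : Ω → ℝ) (α a b : ℝ) :
    {ω | α < |f ω - h ω|} ⊆
      {ω | a * |e ω| ≤ |f ω - g ω|} ∪ {ω | b * |e ω| ≤ |g ω - h ω|} ∪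
        {ω | α ≤ (a + b) * |e ω|} := by
  intro ω hω
  by_contra hnot
  simp only [Set.mem_union, Set.mem_ofPred_eq, not_or, not_le] at hω hnot
  obtain ⟨⟨hfg, hgh⟩, hα⟩ := hnot
  have := abs_sub_le (f ω) (g ω) (h ω)
  linarith

theorem measureReal_le_mul_le_div_mul_integral {Ω : Type*} [MeasurableSpace Ω] {μ : Measure Ω}
    {f : Ω → ℝ} (hf_nonneg : 0 ≤ᵐ[μ] f) (hf_int : Integrable f μ) {α c : ℝ} (hα : 0 < α)
    (hc : 0 < c) :
    μ.real {ω | α ≤ c * f ω} ≤ c / α * ∫ ω, f ω ∂μ := by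
  have hset : {ω | α ≤ c * f ω} = {ω | α / c ≤ f ω} := by
    ext ω
    simp only [Set.mem_ofPred_eq, div_le_iff₀' hc]
  have hmarkov := mul_meas_ge_le_integral_of_nonneg hf_nonneg hf_int (α / c)
  rw [← le_div_iff₀' (div_pos hα hc)] at hmarkov
  rw [hset]
  calc _ ≤ (∫ ω, f ω ∂μ) / (α / c) := hmarkov
    _ = c / α * ∫ ω, f ω ∂μ := by field_simp

theorem bapc_surrogate_accuracy_general
    {Ω : Type*} [MeasurableSpace Ω] (μ : Measure Ω) [IsProbabilityMeasure μ]
    (ε εhat d : Ω → ℝ) (α η₁ η₂ δ₁ δ₂ : ℝ)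
    (hα : 0 < α)
    (hη₁ : η₁ ∈ Set.Ioc (0 : ℝ) 1) (hη₂ : η₂ ∈ Set.Ioc (0 : ℝ) 1)
    (hint : Integrable ε μ)
    (hacc : (μ {ω | |ε ω - εhat ω| ≥ η₁ * |ε ω|}).toReal < δ₁)
    (hfid : (μ {ω | |εhat ω - d ω| ≥ η₂ * |ε ω|}).toReal < δ₂) :
    (μ {ω | |ε ω - d ω| > α}).toReal
      < (η₁ + η₂) / α * (∫ ω, |ε ω| ∂μ) + δ₁ + δ₂ + δ₁ * δ₂ := by
  have hmarkov : μ.real {ω | α ≤ (η₁ + η₂) * |ε ω|} ≤ (η₁ + η₂) / α * ∫ ω, |ε ω| ∂μ :=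
    measureReal_le_mul_le_div_mul_integral (.of_forall fun ω => abs_nonneg (ε ω)) hint.abs hα
      (add_pos hη₁.1 hη₂.1)
  have hunion : μ.real {ω | α < |ε ω - d ω|} ≤ μ.real {ω | η₁ * |ε ω| ≤ |ε ω - εhat ω|} +
      μ.real {ω | η₂ * |ε ω| ≤ |εhat ω - d ω|} + μ.real {ω | α ≤ (η₁ + η₂) * |ε ω|} :=
    (measureReal_mono (setOf_lt_abs_sub_subset ε εhat d ε α η₁ η₂)).trans
      ((measureReal_union_le _ _).trans (add_le_add_left (measureReal_union_le _ _) _))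
  have hδ₁ : 0 < δ₁ := measureReal_nonneg.trans_lt hacc
  have hδ₂ : 0 < δ₂ := measureReal_nonneg.trans_lt hfid
  rw [← measureReal_def] at hacc hfid ⊢
  linarith [mul_pos hδ₁ hδ₂]

/-- Loss in surrogate accuracy due to training error and lack of model fidelity:
under weak (η₁,δ₁)-accuracy and weak (η₂,δ₂)-fidelity,
ℙ[|ε - d| > α] < ((η₁+η₂)/α)·E[|ε|] + δ₁ + δ₂ + δ₁·δ₂. -/
theorem bapc_surrogate_accuracy
    {Ω : Type*} [MeasurableSpace Ω] (μ : Measure Ω) [IsProbabilityMeasure μ]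
    (ε εhat d : Ω → ℝ) (α η₁ η₂ δ₁ δ₂ : ℝ)
    (hα : 0 < α)
    (hη₁ : η₁ ∈ Set.Ioc (0 : ℝ) 1) (hη₂ : η₂ ∈ Set.Ioc (0 : ℝ) 1)
    (hδ₁ : δ₁ ∈ Set.Ioo (0 : ℝ) 1) (hδ₂ : δ₂ ∈ Set.Ioo (0 : ℝ) 1)
    (hint : Integrable ε μ)
    (hacc : (μ {ω | |ε ω - εhat ω| ≥ η₁ * |ε ω|}).toReal < δ₁)
    (hfid : (μ {ω | |εhat ω - d ω| ≥ η₂ * |ε ω|}).toReal < δ₂) :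
    (μ {ω | |ε ω - d ω| > α}).toReal
      < (η₁ + η₂) / α * (∫ ω, |ε ω| ∂μ) + δ₁ + δ₂ + δ₁ * δ₂ :=
  bapc_surrogate_accuracy_general μ ε εhat d α η₁ η₂ δ₁ δ₂ hα hη₁ hη₂ hint hacc hfid
end

section
/- Let ε, ε̂, d : Ω → ℝ be random variables on a probability space with Δε := ε - ε̂, and let η₁, η₂ ∈ (0,1], δ₁, δ₂ ∈ (0,1), α > 0. If ℙ[|Δε| ≥ η₁·|ε|] < δ₁ and ℙ[|ε̂ - d| ≥ η₂·|ε|] < δ₂, then ℙ[|ε̂ - d| + |Δε| > α] < ℙ[(η₁+η₂)·|ε| > α] + δ₁ + δ₂. -/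
open MeasureTheory

theorem setOf_lt_add_subset {Ω : Type*} (f g a b : Ω → ℝ) (α : ℝ) :
    {ω | α < f ω + g ω} ⊆ {ω | α < a ω + b ω} ∪ ({ω | a ω ≤ f ω} ∪ {ω | b ω ≤ g ω}) := by
  intro ω (hω : α < f ω + g ω)
  by_contra! h
  simp only [Set.mem_union, Set.mem_ofPred_eq, not_or, not_lt, not_le] at h
  obtain ⟨hsum, hf, hg⟩ := h
  linarith

theorem measureReal_le_add_add_of_subset_union {Ω : Type*} [MeasurableSpace Ω] (μ : Measure Ω)
    [IsFiniteMeasure μ] {s t u v : Set Ω} (h : s ⊆ t ∪ (u ∪ v)) :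
    μ.real s ≤ μ.real t + μ.real u + μ.real v :=
  calc μ.real s ≤ μ.real (t ∪ (u ∪ v)) := measureReal_mono h
    _ ≤ μ.real t + μ.real (u ∪ v) := measureReal_union_le _ _
    _ ≤ μ.real t + μ.real u + μ.real v := by
      rw [add_assoc]; gcongr; exact measureReal_union_le _ _

theorem bapc_union_bound_step_general
    {Ω : Type*} [MeasurableSpace Ω] (μ : Measure Ω) [IsProbabilityMeasure μ]
    (ε εhat d : Ω → ℝ) (α η₁ η₂ δ₁ δ₂ : ℝ)
    (hacc : (μ {ω | |ε ω - εhat ω| ≥ η₁ * |ε ω|}).toReal < δ₁)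
    (hfid : (μ {ω | |εhat ω - d ω| ≥ η₂ * |ε ω|}).toReal < δ₂) :
    (μ {ω | |εhat ω - d ω| + |ε ω - εhat ω| > α}).toReal
      < (μ {ω | (η₁ + η₂) * |ε ω| > α}).toReal + δ₁ + δ₂ := by
  have hsplit := setOf_lt_add_subset (fun ω ↦ |εhat ω - d ω|) (fun ω ↦ |ε ω - εhat ω|)
    (fun ω ↦ η₂ * |ε ω|) (fun ω ↦ η₁ * |ε ω|) α
  simp only [← add_mul, add_comm η₂ η₁] at hsplit
  have hunion := measureReal_le_add_add_of_subset_union μ hsplit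
  simp only [Measure.real, ge_iff_le, gt_iff_lt] at hunion hacc hfid ⊢
  linarith

/-- Key intermediate step in the BAPC surrogate-accuracy theorem:
splitting on the events {|Δε| ≥ η₁|ε|} and {|ε̂ - d| ≥ η₂|ε|} gives the union bound
ℙ[|ε̂ - d| + |Δε| > α] < ℙ[(η₁+η₂)·|ε| > α] + δ₁ + δ₂. -/
theorem bapc_union_bound_step
    {Ω : Type*} [MeasurableSpace Ω] (μ : Measure Ω) [IsProbabilityMeasure μ]
    (ε εhat d : Ω → ℝ) (α η₁ η₂ δ₁ δ₂ : ℝ)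
    (hα : 0 < α)
    (hη₁ : η₁ ∈ Set.Ioc (0 : ℝ) 1) (hη₂ : η₂ ∈ Set.Ioc (0 : ℝ) 1)
    (hδ₁ : δ₁ ∈ Set.Ioo (0 : ℝ) 1) (hδ₂ : δ₂ ∈ Set.Ioo (0 : ℝ) 1)
    (hacc : (μ {ω | |ε ω - εhat ω| ≥ η₁ * |ε ω|}).toReal < δ₁)
    (hfid : (μ {ω | |εhat ω - d ω| ≥ η₂ * |ε ω|}).toReal < δ₂) :
    (μ {ω | |εhat ω - d ω| + |ε ω - εhat ω| > α}).toReal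
      < (μ {ω | (η₁ + η₂) * |ε ω| > α}).toReal + δ₁ + δ₂ :=
  bapc_union_bound_step_general μ ε εhat d α η₁ η₂ δ₁ δ₂ hacc hfid
end

section
/- Let D be a nonnegative real-valued integrable random variable with cumulative distribution function F, and let 0 < c < p. Define the expected profit G(q) = p·E[min(D, q)] - c·q for q ≥ 0. Then any q* ≥ 0 satisfying F(q*) = 1 - c/p maximizes G; that is, for all q ≥ 0, G(q) ≤ G(q*). (q* = F⁻¹(1 - c/p) is the critical fractile of the newsvendor problem.) -/
/-!
Moving the order from `r` to `q` changes the units sold, `min D q - min D r`, by at most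
`q - r` when demand exceeds `r` and by at most `0` otherwise, in either direction. Hence
`E[min D q] - E[min D r] ≤ (q - r) P(D > r)`. At the critical fractile `P(D > q*) = c / p`, so
the revenue gain `p (E[min D q] - E[min D q*])` never exceeds the extra cost `c (q - q*)`.
-/

open MeasureTheory

section MinIndicator

variable {α : Type*} [AddCommGroup α] [LinearOrder α] [IsOrderedAddMonoid α]

theorem min_sub_min_le_indicator (a q r : α) :
    min a q - min a r ≤ {x | r < x}.indicator (fun _ => q - r) a := by
  by_cases hra : r < a
  · rw [Set.indicator_of_mem (show a ∈ {x | r < x} from hra), min_eq_right hra.le]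
    exact sub_le_sub_right (min_le_right a q) r
  · rw [Set.indicator_of_notMem (show a ∉ {x | r < x} from hra), min_eq_left (not_lt.mp hra), sub_nonpos]
    exact min_le_left a q

end MinIndicator

section TruncatedMean

variable {Ω : Type*} [MeasurableSpace Ω] {μ : Measure Ω} {X : Ω → ℝ}

theorem integral_min_sub_integral_min_le [IsFiniteMeasure μ] (hX : Integrable X μ) (q r : ℝ) :
    ∫ ω, min (X ω) q ∂μ - ∫ ω, min (X ω) r ∂μ ≤ (q - r) * μ.real {ω | r < X ω} := by
  have hs : NullMeasurableSet {ω | r < X ω} μ :=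
    nullMeasurableSet_lt aemeasurable_const hX.aemeasurable
  have hmin (t : ℝ) : Integrable (fun ω => min (X ω) t) μ := hX.inf (integrable_const t)
  calc ∫ ω, min (X ω) q ∂μ - ∫ ω, min (X ω) r ∂μ
      = ∫ ω, (min (X ω) q - min (X ω) r) ∂μ := (integral_sub (hmin q) (hmin r)).symm
    _ ≤ ∫ ω, {ω | r < X ω}.indicator (fun _ => q - r) ω ∂μ :=
        integral_mono ((hmin q).sub (hmin r)) ((integrable_const _).indicator₀ hs)
          fun ω => min_sub_min_le_indicator (X ω) q r
    _ = (q - r) * μ.real {ω | r < X ω} := by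
        rw [integral_indicator₀ hs, setIntegral_const, smul_eq_mul, mul_comm]

theorem probReal_lt_eq_one_sub_probReal_le [IsProbabilityMeasure μ] (hX : AEMeasurable X μ)
    (r : ℝ) : μ.real {ω | r < X ω} = 1 - μ.real {ω | X ω ≤ r} := by
  rw [← probReal_compl_eq_one_sub₀ (nullMeasurableSet_le hX aemeasurable_const)]
  simp only [Set.compl_ofPred, not_le]

end TruncatedMean

theorem newsvendor_critical_fractile_general
    {Ω : Type*} [MeasurableSpace Ω] (μ : Measure Ω) [IsProbabilityMeasure μ]
    (D : Ω → ℝ)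
    (hDint : Integrable D μ)
    (p c : ℝ) (hc : 0 < c) (hcp : c < p)
    (F : ℝ → ℝ) (hF : ∀ x, F x = (μ {ω | D ω ≤ x}).toReal)
    (G : ℝ → ℝ) (hG : ∀ q, G q = p * (∫ ω, min (D ω) q ∂μ) - c * q)
    (qstar : ℝ) (hfrac : F qstar = 1 - c / p) :
    ∀ q, 0 ≤ q → G q ≤ G qstar := by
  intro q _
  have hp : 0 < p := hc.trans hcp
  have htail : μ.real {ω | qstar < D ω} = c / p := by
    rw [probReal_lt_eq_one_sub_probReal_le hDint.aemeasurable, measureReal_def, ← hF, hfrac]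
    ring
  have hgain := integral_min_sub_integral_min_le hDint q qstar
  rw [htail] at hgain
  calc G q
      = G qstar + p * (∫ ω, min (D ω) q ∂μ - ∫ ω, min (D ω) qstar ∂μ) - c * (q - qstar) := by
        rw [hG, hG]; ring
    _ ≤ G qstar + p * ((q - qstar) * (c / p)) - c * (q - qstar) := by gcongr
    _ = G qstar := by field_simp; ring

/-- Newsvendor critical fractile: for a nonnegative integrable demand `D` with CDF `F`
and `0 < c < p`, any `q* ≥ 0` with `F(q*) = 1 - c/p` maximizes the expected profit
`G(q) = p·E[min(D, q)] - c·q` over all `q ≥ 0`. -/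
theorem newsvendor_critical_fractile
    {Ω : Type*} [MeasurableSpace Ω] (μ : Measure Ω) [IsProbabilityMeasure μ]
    (D : Ω → ℝ) (hD : Measurable D) (hD0 : ∀ ω, 0 ≤ D ω)
    (hDint : Integrable D μ)
    (p c : ℝ) (hc : 0 < c) (hcp : c < p)
    (F : ℝ → ℝ) (hF : ∀ x, F x = (μ {ω | D ω ≤ x}).toReal)
    (G : ℝ → ℝ) (hG : ∀ q, G q = p * (∫ ω, min (D ω) q ∂μ) - c * q)
    (qstar : ℝ) (hq0 : 0 ≤ qstar) (hfrac : F qstar = 1 - c / p) :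
    ∀ q, 0 ≤ q → G q ≤ G qstar :=
  newsvendor_critical_fractile_general μ D hDint p c hc hcp F hF G hG qstar hfrac
end
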